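/- arXiv:2409.05974 — 5 statements merged into one kernel-verified Lean document; each statement's English description precedes it below -/
import Mathlib

section
/- For a Poisson distribution with parameter α² (α > 0 real), the probabilities p_l = e^{-α²} α^{2l}/l! satisfy, for l in the range |l - α²| ≤ R·α with R = o(α^{1/3}) as α → ∞, the expansion p_l = (e^{-s²/2}/(√(2π)·α))·[1 + a₁/α + a₂/α² + O(s⁹/α³)], where s = (l - α²)/α, a₁ = (s³ - 3s)/6, and a₂ = (s⁶ - 12s⁴ + 27s² - 6)/72. -/
/-!
Stirling's formula with an `O(1/l²)` remainder (from Robbins' bound on the Stirling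
sequence) writes `p_l` exactly as the Gaussian density times `exp T`, where, with `u = s/α`
and Bennett's function `h(u) = (1 + u) log (1 + u) - u`,
`T = s²/2 - α² h(u) - log (1 + u) / 2 - 1/(12 l) + O(1/l²)`.
After Taylor-expanding `h` and `log`, every term of `T` is a monomial `|s|^k / α^j` with
`k ≤ 3j`, hence at most `w^j` for the weight `w = (1 + |s|³)/α`, which is small in the window
because `|s| = o(α^{1/3})`. Thus `T = a₁/α + b/α² + O(w³)` with `b = (-s⁴ + 3s² - 1)/12`,
and `exp T = 1 + T + T²/2 + O(T³)` gives the expansion with `a₂ = b + a₁²/2`;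
finally `w³ ≤ 4 (1 + |s|⁹)/α³`.
-/

open Filter Real Topology Finset
open scoped Nat

lemma sub_le_of_forall_sub_succ_le {f g : ℕ → ℝ} {L : ℝ} (hf : Tendsto f atTop (𝓝 L))
    (hg : Tendsto g atTop (𝓝 0)) (h : ∀ n, f n - f (n + 1) ≤ g n - g (n + 1)) (n : ℕ) :
    f n - L ≤ g n := by
  have hmono : Monotone fun n => f n - g n := monotone_nat_of_le_succ fun m => by linarith [h m]
  linarith [hmono.ge_of_tendsto (by simpa using hf.sub hg) n]

noncomputable def stirlingRemainder (n : ℕ) : ℝ :=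
  log n ! - ((n + 1 / 2) * log n - n + log (2 * π) / 2 + 1 / (12 * n))

lemma stirlingRemainder_eq_log_stirlingSeq {n : ℕ} (hn : n ≠ 0) :
    stirlingRemainder n = log (Stirling.stirlingSeq n) - log √π - 1 / (12 * n) := by
  have hn' : (0 : ℝ) < n := by positivity
  rw [stirlingRemainder, Stirling.log_stirlingSeq_formula, log_mul two_ne_zero hn'.ne',
    log_div hn'.ne' (exp_pos 1).ne', log_exp, log_sqrt pi_pos.le, log_mul two_ne_zero pi_ne_zero]
  ring

lemma tendsto_log_stirlingSeq_succ :
    Tendsto (fun m : ℕ => log (Stirling.stirlingSeq (m + 1))) atTop (𝓝 (log √π)) :=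
  (Stirling.tendsto_stirlingSeq_sqrt_pi.comp (tendsto_add_atTop_nat 1)).log (by positivity)

lemma log_stirlingSeq_succ_sub_le (m : ℕ) :
    log (Stirling.stirlingSeq (m + 1)) - log √π ≤ 1 / (12 * (m + 1 : ℝ)) := by
  have hg : Tendsto (fun m : ℕ => 1 / (12 * (m + 1 : ℝ))) atTop (𝓝 0) := by
    simpa [div_eq_mul_inv, mul_comm] using
      (tendsto_one_div_add_atTop_nhds_zero_nat (𝕜 := ℝ)).div_const 12
  refine sub_le_of_forall_sub_succ_le tendsto_log_stirlingSeq_succ hg (fun k => ?_) m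
  have robbins := Stirling.log_stirlingSeq_sdiff_le (k + 1)
  push_cast at robbins ⊢
  convert robbins using 1
  field_simp
  ring

lemma le_log_stirlingSeq_succ_sub (m : ℕ) :
    1 / (6 * (2 * (m + 1 : ℝ) + 1)) ≤ log (Stirling.stirlingSeq (m + 1)) - log √π := by
  have hg : Tendsto (fun m : ℕ => -(1 / (6 * (2 * (m + 1 : ℝ) + 1)))) atTop (𝓝 0) := by
    refine (squeeze_zero (fun _ => by positivity) (fun k => ?_)
      tendsto_one_div_add_atTop_nhds_zero_nat).neg.trans (by rw [neg_zero])
    gcongr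
    linarith
  suffices ∀ k : ℕ,
      1 / (6 * (2 * ((k : ℝ) + 1) + 1)) - 1 / (6 * (2 * ((k : ℝ) + 1 + 1) + 1)) ≤
        log (Stirling.stirlingSeq (k + 1)) - log (Stirling.stirlingSeq (k + 1 + 1)) by
    have := sub_le_of_forall_sub_succ_le tendsto_log_stirlingSeq_succ.neg hg
      (fun k => by push_cast; linarith [this k]) m
    linarith
  intro k
  -- the first term of the series for `log (stirlingSeq (k + 1)) - log (stirlingSeq (k + 2))`
  have hfirst := le_hasSum (Stirling.log_stirlingSeq_sdiff_hasSum k) 0 fun j _ => by positivity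
  norm_num [← mul_inv] at hfirst
  refine le_trans ?_ hfirst
  rw [div_sub_div _ _ (by positivity) (by positivity), ← div_eq_mul_inv, div_div,
    div_le_div_iff₀ (by positivity) (by positivity)]
  nlinarith

lemma abs_stirlingRemainder_le {n : ℕ} (hn : n ≠ 0) :
    |stirlingRemainder n| ≤ 1 / (24 * n ^ 2) := by
  obtain ⟨m, rfl⟩ := Nat.exists_eq_succ_of_ne_zero hn
  have hlo := le_log_stirlingSeq_succ_sub m
  have hhi := log_stirlingSeq_succ_sub_le m
  rw [stirlingRemainder_eq_log_stirlingSeq hn, abs_le]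
  push_cast
  have hgap : 1 / (12 * ((m : ℝ) + 1)) - 1 / (6 * (2 * ((m : ℝ) + 1) + 1)) ≤
      1 / (24 * ((m : ℝ) + 1) ^ 2) := by
    rw [div_sub_div _ _ (by positivity) (by positivity),
      div_le_div_iff₀ (by positivity) (by positivity)]
    nlinarith
  constructor <;> nlinarith [show (0 : ℝ) ≤ 1 / (24 * ((m : ℝ) + 1) ^ 2) by positivity]

lemma abs_log_one_add_sub_sum_le {u : ℝ} (hu : |u| ≤ 1 / 2) (n : ℕ) :
    |log (1 + u) - ∑ i ∈ range n, (-1) ^ i * u ^ (i + 1) / (i + 1)| ≤ 2 * |u| ^ (n + 1) := by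
  have h := abs_log_sub_add_sum_range_le (x := -u) (by rw [abs_neg]; linarith) n
  have hsum : ∑ i ∈ range n, (-u) ^ (i + 1) / (i + 1) =
      -∑ i ∈ range n, (-1) ^ i * u ^ (i + 1) / (i + 1) := by
    rw [← sum_neg_distrib]
    refine sum_congr rfl fun i _ => ?_
    rw [neg_pow, pow_succ]
    ring
  rw [abs_neg, sub_neg_eq_add, hsum, neg_add_eq_sub] at h
  refine h.trans ?_
  rw [div_le_iff₀ (by linarith)]
  nlinarith [pow_nonneg (abs_nonneg u) (n + 1)]

lemma abs_log_one_add_sub_le {u : ℝ} (hu : |u| ≤ 1 / 2) :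
    |log (1 + u) - (u - u ^ 2 / 2)| ≤ 2 * |u| ^ 3 := by
  convert abs_log_one_add_sub_sum_le hu 2 using 3
  simp [sum_range_succ]
  ring

noncomputable def bennett (u : ℝ) : ℝ := (1 + u) * log (1 + u) - u

lemma abs_bennett_sub_le {u : ℝ} (hu : |u| ≤ 1 / 2) :
    |bennett u - (u ^ 2 / 2 - u ^ 3 / 6 + u ^ 4 / 12)| ≤ 4 * |u| ^ 5 := by
  have hlog : |log (1 + u) - (u - u ^ 2 / 2 + u ^ 3 / 3 - u ^ 4 / 4)| ≤ 2 * |u| ^ 5 := by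
    convert abs_log_one_add_sub_sum_le hu 4 using 3
    simp [sum_range_succ]
    ring
  have hsplit : bennett u - (u ^ 2 / 2 - u ^ 3 / 6 + u ^ 4 / 12) =
      (1 + u) * (log (1 + u) - (u - u ^ 2 / 2 + u ^ 3 / 3 - u ^ 4 / 4)) - u ^ 5 / 4 := by
    rw [bennett]
    ring
  have h1u : |1 + u| ≤ 3 / 2 := by
    rw [abs_le] at hu ⊢
    constructor <;> linarith
  calc |bennett u - (u ^ 2 / 2 - u ^ 3 / 6 + u ^ 4 / 12)|
      ≤ |1 + u| * |log (1 + u) - (u - u ^ 2 / 2 + u ^ 3 / 3 - u ^ 4 / 4)| + |u| ^ 5 / 4 := by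
        rw [hsplit, ← abs_mul]
        refine (abs_sub _ _).trans_eq ?_
        rw [abs_div, abs_pow]
        norm_num
    _ ≤ 3 / 2 * (2 * |u| ^ 5) + |u| ^ 5 / 4 := by gcongr
    _ ≤ 4 * |u| ^ 5 := by nlinarith [pow_nonneg (abs_nonneg u) 5]

lemma abs_exp_sub_second_order_le {T A B w K : ℝ} (hw : w ≤ 1 / 2) (hKw : K * w ≤ 1)
    (hA : |A| ≤ w) (hB : |B| ≤ w ^ 2) (hT : |T - (A + B)| ≤ K * w ^ 3) :
    |exp T - (1 + A + (B + A ^ 2 / 2))| ≤ (K + 11) * w ^ 3 := by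
  have hw0 : 0 ≤ w := (abs_nonneg A).trans hA
  have hTA : |T - A| ≤ 2 * w ^ 2 := by
    calc |T - A| = |B + (T - (A + B))| := by ring_nf
      _ ≤ w ^ 2 + K * w ^ 3 := (abs_add_le _ _).trans (add_le_add hB hT)
      _ ≤ 2 * w ^ 2 := by nlinarith [sq_nonneg w]
  have hT2 : |T| ≤ 2 * w := by
    calc |T| = |A + (T - A)| := by ring_nf
      _ ≤ w + 2 * w ^ 2 := (abs_add_le _ _).trans (add_le_add hA hTA)
      _ ≤ 2 * w := by nlinarith
  have hexp : |exp T - (1 + T + T ^ 2 / 2)| ≤ |T| ^ 3 := by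
    have h := exp_bound (n := 3) (hT2.trans (by linarith)) (by norm_num)
    norm_num [sum_range_succ, Nat.factorial] at h
    linarith [pow_nonneg (abs_nonneg T) 3]
  have hsplit : exp T - (1 + A + (B + A ^ 2 / 2)) =
      (exp T - (1 + T + T ^ 2 / 2)) + (T - (A + B)) + (T - A) * (T + A) / 2 := by ring
  calc |exp T - (1 + A + (B + A ^ 2 / 2))|
      ≤ |T| ^ 3 + K * w ^ 3 + 2 * w ^ 2 * (3 * w) / 2 := by
        rw [hsplit]
        refine (abs_add_le _ _).trans
          (add_le_add ((abs_add_le _ _).trans (add_le_add hexp hT)) ?_)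
        rw [abs_div, abs_mul, abs_two]
        gcongr
        exact (abs_add_le _ _).trans (by linarith)
    _ ≤ (2 * w) ^ 3 + K * w ^ 3 + 3 * w ^ 3 := by gcongr; linarith
    _ = (K + 11) * w ^ 3 := by ring

lemma pow_le_one_add_pow_three_pow {x : ℝ} (hx : 0 ≤ x) {k j : ℕ} (hkj : k ≤ 3 * j) :
    x ^ k ≤ (1 + x ^ 3) ^ j := by
  rcases le_total x 1 with hx1 | hx1
  · exact (pow_le_one₀ hx hx1).trans (one_le_pow₀ (by linarith [pow_nonneg hx 3]))
  · calc x ^ k ≤ (x ^ 3) ^ j := by rw [← pow_mul]; exact pow_le_pow_right₀ hx1 hkj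
      _ ≤ (1 + x ^ 3) ^ j := by gcongr; linarith

lemma abs_pow_div_pow_le {s α : ℝ} (hα : 0 < α) {k j : ℕ} (hkj : k ≤ 3 * j) :
    |s| ^ k / α ^ j ≤ ((1 + |s| ^ 3) / α) ^ j := by
  rw [div_pow]
  gcongr
  exact pow_le_one_add_pow_three_pow (abs_nonneg s) hkj

lemma one_add_pow_three_pow_three_le {x : ℝ} (hx : 0 ≤ x) :
    (1 + x ^ 3) ^ 3 ≤ 4 * (1 + x ^ 9) := by
  have hx3 : 0 ≤ x ^ 3 := by positivity
  nlinarith [mul_nonneg (sq_nonneg (1 - x ^ 3)) (by linarith : 0 ≤ 1 + x ^ 3)]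

lemma half_sq_le_sq_add_mul {α s : ℝ} (hα : 0 < α) (hw : (1 + |s| ^ 3) / α ≤ 1 / 2) :
    α ^ 2 / 2 ≤ α ^ 2 + s * α := by
  have h1 := pow_le_one_add_pow_three_pow (abs_nonneg s) (k := 1) (j := 1) (by norm_num)
  simp only [pow_one] at h1
  rw [div_le_iff₀ hα] at hw
  nlinarith [neg_abs_le s]

lemma abs_cubic_div_le {s α : ℝ} (hα : 0 < α) :
    |(s ^ 3 - 3 * s) / 6 / α| ≤ (1 + |s| ^ 3) / α := by
  have h1 := pow_le_one_add_pow_three_pow (abs_nonneg s) (k := 1) (j := 1) (by norm_num)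
  simp only [pow_one] at h1
  rw [abs_div, abs_div, abs_of_pos hα, abs_of_pos (by norm_num : (0 : ℝ) < 6)]
  gcongr
  calc |s ^ 3 - 3 * s| / 6 ≤ (|s| ^ 3 + 3 * |s|) / 6 := by
        gcongr
        refine (abs_sub _ _).trans_eq ?_
        rw [abs_pow, abs_mul, abs_of_pos (by norm_num : (0 : ℝ) < 3)]
    _ ≤ 1 + |s| ^ 3 := by linarith [pow_nonneg (abs_nonneg s) 3]

lemma abs_quartic_div_le {s α : ℝ} (hα : 0 < α) :
    |(-s ^ 4 + 3 * s ^ 2 - 1) / 12 / α ^ 2| ≤ ((1 + |s| ^ 3) / α) ^ 2 := by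
  have h4 := pow_le_one_add_pow_three_pow (abs_nonneg s) (k := 4) (j := 2) (by norm_num)
  have h2 := pow_le_one_add_pow_three_pow (abs_nonneg s) (k := 2) (j := 2) (by norm_num)
  have h0 := pow_le_one_add_pow_three_pow (abs_nonneg s) (k := 0) (j := 2) (by norm_num)
  rw [Even.pow_abs (by decide)] at h4 h2
  rw [pow_zero] at h0
  rw [div_pow, abs_div, abs_div, abs_of_pos (by positivity : 0 < α ^ 2),
    abs_of_pos (by norm_num : (0 : ℝ) < 12)]
  gcongr
  rw [div_le_iff₀ (by norm_num), abs_le]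
  constructor <;> nlinarith [sq_nonneg s, pow_nonneg (sq_nonneg s) 2]

noncomputable def poissonExponent (α s : ℝ) : ℝ :=
  s ^ 2 / 2 - α ^ 2 * bennett (s / α) - log (1 + s / α) / 2 - 1 / (12 * (α ^ 2 + s * α))

lemma abs_poissonExponent_sub_le {α s : ℝ} (hα : 0 < α) (hw : (1 + |s| ^ 3) / α ≤ 1 / 2) :
    |poissonExponent α s - ((s ^ 3 - 3 * s) / 6 / α + (-s ^ 4 + 3 * s ^ 2 - 1) / 12 / α ^ 2)| ≤
      6 * ((1 + |s| ^ 3) / α) ^ 3 := by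
  have hl_pos : 0 < α ^ 2 + s * α := by linarith [half_sq_le_sq_add_mul hα hw, pow_pos hα 2]
  have hsplit : poissonExponent α s -
        ((s ^ 3 - 3 * s) / 6 / α + (-s ^ 4 + 3 * s ^ 2 - 1) / 12 / α ^ 2) =
      -(α ^ 2 * (bennett (s / α) - ((s / α) ^ 2 / 2 - (s / α) ^ 3 / 6 + (s / α) ^ 4 / 12))) -
        (log (1 + s / α) - (s / α - (s / α) ^ 2 / 2)) / 2 +
          s / (12 * α * (α ^ 2 + s * α)) := by
    have : α + s ≠ 0 := fun h => hl_pos.ne' (by linear_combination α * h)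
    rw [poissonExponent]
    field_simp
    ring
  rw [hsplit]
  set w := (1 + |s| ^ 3) / α
  set u := s / α with hu_def
  have hu_pow (k : ℕ) : |u| ^ k = |s| ^ k / α ^ k := by
    rw [hu_def, abs_div, abs_of_pos hα, div_pow]
  have hu : |u| ≤ 1 / 2 := by
    rw [← pow_one |u|, hu_pow]
    exact (abs_pow_div_pow_le hα (k := 1) (j := 1) (by norm_num)).trans (by rwa [pow_one])
  have hb : |α ^ 2 * (bennett u - (u ^ 2 / 2 - u ^ 3 / 6 + u ^ 4 / 12))| ≤ 4 * w ^ 3 := by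
    rw [abs_mul, abs_of_pos (by positivity)]
    calc α ^ 2 * |bennett u - (u ^ 2 / 2 - u ^ 3 / 6 + u ^ 4 / 12)|
        ≤ α ^ 2 * (4 * |u| ^ 5) := by
          gcongr
          exact abs_bennett_sub_le hu
      _ = 4 * (|s| ^ 5 / α ^ 3) := by rw [hu_pow]; field_simp
      _ ≤ 4 * w ^ 3 := by gcongr; exact abs_pow_div_pow_le hα (by norm_num)
  have hl : |(log (1 + u) - (u - u ^ 2 / 2)) / 2| ≤ w ^ 3 := by
    rw [abs_div, abs_two, div_le_iff₀ two_pos]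
    calc |log (1 + u) - (u - u ^ 2 / 2)| ≤ 2 * (|s| ^ 3 / α ^ 3) :=
          hu_pow 3 ▸ abs_log_one_add_sub_le hu
      _ ≤ w ^ 3 * 2 := by
          linarith [abs_pow_div_pow_le (s := s) hα (k := 3) (j := 3) (by norm_num)]
  have hr : |s / (12 * α * (α ^ 2 + s * α))| ≤ w ^ 3 := by
    rw [abs_div, abs_of_pos (by positivity : 0 < 12 * α * (α ^ 2 + s * α))]
    calc |s| / (12 * α * (α ^ 2 + s * α)) ≤ |s| / (12 * α * (α ^ 2 / 2)) := by
          gcongr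
          exact half_sq_le_sq_add_mul hα hw
      _ ≤ |s| ^ 1 / α ^ 3 := by rw [pow_one]; gcongr; nlinarith [pow_pos hα 3]
      _ ≤ w ^ 3 := abs_pow_div_pow_le hα (by norm_num)
  calc _ ≤ 4 * w ^ 3 + w ^ 3 + w ^ 3 := by
        refine (abs_add_le _ _).trans (add_le_add ((abs_sub _ _).trans (add_le_add ?_ hl)) hr)
        rwa [abs_neg]
    _ = 6 * w ^ 3 := by ring

lemma poisson_eq_gaussian_mul_exp {α s : ℝ} (hα : 0 < α) {l : ℕ} (hl : l ≠ 0)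
    (hs : (l : ℝ) = α ^ 2 + s * α) :
    exp (-α ^ 2) * α ^ (2 * l) / l ! =
      exp (-s ^ 2 / 2) / (√(2 * π) * α) * exp (poissonExponent α s - stirlingRemainder l) := by
  have hl' : (0 : ℝ) < l := by positivity
  have h1u : 1 + s / α = l / α ^ 2 := by rw [hs]; field_simp
  have hlog : log (1 + s / α) = log l - 2 * log α := by
    rw [h1u, log_div hl'.ne' (by positivity), log_pow]; push_cast; ring
  have hbennett : α ^ 2 * bennett (s / α) = l * log (1 + s / α) - s * α := by
    rw [bennett, h1u]; field_simp
  have hgauss : log (√(2 * π) * α) = log (2 * π) / 2 + log α := by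
    rw [log_mul (by positivity) hα.ne', log_sqrt (by positivity)]
  refine log_injOn_pos (Set.mem_Ioi.2 (by positivity)) (Set.mem_Ioi.2 (by positivity)) ?_
  rw [log_div (by positivity) (by positivity), log_mul (by positivity) (by positivity), log_exp,
    log_pow, log_mul (by positivity) (by positivity), log_div (by positivity) (by positivity),
    log_exp, log_exp, hgauss, poissonExponent, hbennett, stirlingRemainder, hlog, ← hs]
  push_cast
  linear_combination hs

lemma exists_weight_le_of_isLittleO {R : ℝ → ℝ}
    (hR : R =o[atTop] fun α => α ^ ((1 : ℝ) / 3)) {ε : ℝ} (hε : 0 < ε) :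
    ∃ α₀ ≥ 1, ∀ α ≥ α₀, ∀ s, |s| ≤ R α → (1 + |s| ^ 3) / α ≤ ε := by
  set c := min 1 (ε / 2)
  have hc : 0 < c := by positivity
  obtain ⟨M, hM⟩ := eventually_atTop.1 (hR.bound hc)
  refine ⟨max M (max 1 (2 / ε)), le_max_of_le_right (le_max_left _ _), fun α hα s hs => ?_⟩
  have hα1 : 1 ≤ α := le_of_max_le_left (le_of_max_le_right hα)
  have hα0 : 0 < α := by linarith
  have hsc : |s| ≤ c * α ^ ((1 : ℝ) / 3) := by
    have := hM α (le_of_max_le_left hα)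
    rw [norm_eq_abs, norm_eq_abs, abs_of_nonneg (rpow_nonneg hα0.le _)] at this
    exact hs.trans ((le_abs_self _).trans this)
  have hs3 : |s| ^ 3 ≤ ε / 2 * α := by
    calc |s| ^ 3 ≤ (c * α ^ ((1 : ℝ) / 3)) ^ 3 := by gcongr
      _ = c ^ 3 * α := by rw [mul_pow, ← rpow_natCast (α ^ _), ← rpow_mul hα0.le]; norm_num
      _ ≤ ε / 2 * α := by
        gcongr
        calc c ^ 3 ≤ c := pow_le_of_le_one hc.le (min_le_left _ _) (by norm_num)
          _ ≤ ε / 2 := min_le_right _ _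
  rw [div_le_iff₀ hα0]
  have : 2 / ε ≤ α := le_of_max_le_right (le_of_max_le_right hα)
  rw [div_le_iff₀ hε] at this
  linarith

lemma abs_stirlingRemainder_le_weight {α s : ℝ} (hα : 1 ≤ α)
    (hw : (1 + |s| ^ 3) / α ≤ 1 / 2) {l : ℕ} (hs : (l : ℝ) = α ^ 2 + s * α) :
    |stirlingRemainder l| ≤ ((1 + |s| ^ 3) / α) ^ 3 := by
  have hα0 : 0 < α := by linarith
  have hl : α ^ 2 / 2 ≤ l := hs ▸ half_sq_le_sq_add_mul hα0 hw
  have hl0 : l ≠ 0 := by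
    have : (0 : ℝ) < l := by linarith [pow_pos hα0 2]
    exact_mod_cast this.ne'
  calc |stirlingRemainder l| ≤ 1 / (24 * (l : ℝ) ^ 2) := abs_stirlingRemainder_le hl0
    _ ≤ 1 / (24 * (α ^ 2 / 2) ^ 2) := by gcongr
    _ ≤ |s| ^ 0 / α ^ 3 := by
      rw [pow_zero, div_le_div_iff₀ (by positivity) (by positivity)]
      nlinarith [pow_le_pow_right₀ hα (show 3 ≤ 4 by norm_num)]
    _ ≤ ((1 + |s| ^ 3) / α) ^ 3 := abs_pow_div_pow_le hα0 (by norm_num)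

theorem poisson_gaussian_expansion_general
    (R : ℝ → ℝ)
    (hR : (fun α => R α) =o[atTop] (fun α => α ^ ((1 : ℝ) / 3))) :
    ∃ C > (0 : ℝ), ∃ α₀ : ℝ, ∀ α ≥ α₀, ∀ l : ℕ,
      |(l : ℝ) - α ^ 2| ≤ R α * α →
      |Real.exp (-α ^ 2) * α ^ (2 * l) / (Nat.factorial l : ℝ) -
          Real.exp (-(((l : ℝ) - α ^ 2) / α) ^ 2 / 2) / (Real.sqrt (2 * Real.pi) * α) *
            (1 + ((((l : ℝ) - α ^ 2) / α) ^ 3 - 3 * (((l : ℝ) - α ^ 2) / α)) / 6 / α +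
              ((((l : ℝ) - α ^ 2) / α) ^ 6 - 12 * (((l : ℝ) - α ^ 2) / α) ^ 4 +
                27 * (((l : ℝ) - α ^ 2) / α) ^ 2 - 6) / 72 / α ^ 2)|
        ≤ Real.exp (-(((l : ℝ) - α ^ 2) / α) ^ 2 / 2) / (Real.sqrt (2 * Real.pi) * α) *
            (C * (1 + |((l : ℝ) - α ^ 2) / α| ^ 9) / α ^ 3) := by
  obtain ⟨α₀, hα₀, hsmall⟩ := exists_weight_le_of_isLittleO hR (ε := 1 / 7) (by norm_num)
  refine ⟨72, by norm_num, α₀, fun α hα l hl => ?_⟩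
  have hα1 : 1 ≤ α := hα₀.trans hα
  have hα0 : 0 < α := by linarith
  set s := ((l : ℝ) - α ^ 2) / α
  set w := (1 + |s| ^ 3) / α
  have hw : w ≤ 1 / 7 :=
    hsmall α hα s (by rwa [abs_div, abs_of_pos hα0, div_le_iff₀ hα0])
  have hw2 : w ≤ 1 / 2 := hw.trans (by norm_num)
  have hs : (l : ℝ) = α ^ 2 + s * α := by simp only [s]; field_simp; ring
  have hl0 : l ≠ 0 := by
    have : (0 : ℝ) < l := by linarith [half_sq_le_sq_add_mul hα0 hw2, pow_pos hα0 2]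
    exact_mod_cast this.ne'
  have hT : |poissonExponent α s - stirlingRemainder l -
      ((s ^ 3 - 3 * s) / 6 / α + (-s ^ 4 + 3 * s ^ 2 - 1) / 12 / α ^ 2)| ≤ 7 * w ^ 3 := by
    rw [sub_right_comm]
    refine (abs_sub _ _).trans ?_
    linarith [abs_poissonExponent_sub_le hα0 hw2, abs_stirlingRemainder_le_weight hα1 hw2 hs]
  have hA := abs_cubic_div_le (s := s) hα0
  have hB := abs_quartic_div_le (s := s) hα0
  have key := abs_exp_sub_second_order_le hw2 (by linarith) hA hB hT
  rw [poisson_eq_gaussian_mul_exp hα0 hl0 hs, ← mul_sub, abs_mul, abs_of_pos (by positivity)]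
  gcongr
  calc _ = |exp (poissonExponent α s - stirlingRemainder l) - (1 + (s ^ 3 - 3 * s) / 6 / α +
          ((-s ^ 4 + 3 * s ^ 2 - 1) / 12 / α ^ 2 + ((s ^ 3 - 3 * s) / 6 / α) ^ 2 / 2))| := by
        ring_nf
    _ ≤ 18 * w ^ 3 := by linarith
    _ ≤ 72 * (1 + |s| ^ 9) / α ^ 3 := by
      rw [div_pow, mul_div_assoc', div_le_div_iff_of_pos_right (by positivity)]
      linarith [one_add_pow_three_pow_three_le (abs_nonneg s), pow_mul |s| 3 3]

/-- Poisson distribution deviations from Gaussianity (Lemma `poisson gaussian approx`):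
for `p_l = e^{-α²} α^{2l}/l!` and `l` in the window `|l - α²| ≤ R(α)·α` with `R = o(α^{1/3})`,
`p_l = (e^{-s²/2}/(√(2π)α))·[1 + a₁/α + a₂/α² + O(s⁹/α³)]` with `s = (l-α²)/α`,
`a₁ = (s³-3s)/6`, `a₂ = (s⁶-12s⁴+27s²-6)/72`, uniformly over the window. -/
theorem poisson_gaussian_expansion
    (R : ℝ → ℝ) (hRpos : ∀ α, 0 ≤ R α)
    (hR : (fun α => R α) =o[atTop] (fun α => α ^ ((1 : ℝ) / 3))) :
    ∃ C > (0 : ℝ), ∃ α₀ : ℝ, ∀ α ≥ α₀, ∀ l : ℕ,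
      |(l : ℝ) - α ^ 2| ≤ R α * α →
      |Real.exp (-α ^ 2) * α ^ (2 * l) / (Nat.factorial l : ℝ) -
          Real.exp (-(((l : ℝ) - α ^ 2) / α) ^ 2 / 2) / (Real.sqrt (2 * Real.pi) * α) *
            (1 + ((((l : ℝ) - α ^ 2) / α) ^ 3 - 3 * (((l : ℝ) - α ^ 2) / α)) / 6 / α +
              ((((l : ℝ) - α ^ 2) / α) ^ 6 - 12 * (((l : ℝ) - α ^ 2) / α) ^ 4 +
                27 * (((l : ℝ) - α ^ 2) / α) ^ 2 - 6) / 72 / α ^ 2)|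
        ≤ Real.exp (-(((l : ℝ) - α ^ 2) / α) ^ 2 / 2) / (Real.sqrt (2 * Real.pi) * α) *
            (C * (1 + |((l : ℝ) - α ^ 2) / α| ^ 9) / α ^ 3) :=
  poisson_gaussian_expansion_general R hR
end

section
/- For any single-mode state σ' on a harmonic oscillator and any α' ∈ ℂ, the infidelity with the coherent state |α'⟩ satisfies 1 - ⟨α'|σ'|α'⟩ ≤ Tr(σ' a†a) - |Tr(σ' a)|² + |Tr(σ' a) - α'|², i.e., infidelity is bounded by phase-space variance plus squared bias. -/
/-! Displacing by `α'` maps the coherent state `|α'⟩` to the vacuum and shifts the first moment by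
`α'`, so the displacement terms of `Tr(σ'a†a)` cancel against those of `|Tr(σ'a)|²`, leaving
`Tr(τ a†a)` on the right. Markov's inequality for the photon-number distribution of `τ` gives
`1 - ⟨0|τ|0⟩ ≤ Tr(τ a†a)`, because every level `n ≥ 1` carries weight `n ≥ 1`. -/

theorem HasSum.sub_apply_zero_le_tsum_natCast_mul {p : ℕ → ℝ} {s : ℝ} (hp : ∀ n, 0 ≤ p n)
    (hs : HasSum p s) (hN : Summable fun n : ℕ => (n : ℝ) * p n) :
    s - p 0 ≤ ∑' n : ℕ, (n : ℝ) * p n := by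
  have htail : HasSum (fun n => p (n + 1)) (s - p 0) := by
    simpa using (hasSum_nat_add_iff' 1).mpr hs
  have hweight (n : ℕ) : p (n + 1) ≤ ((n + 1 : ℕ) : ℝ) * p (n + 1) := by
    push_cast
    nlinarith [hp (n + 1), n.cast_nonneg (α := ℝ)]
  calc s - p 0 = ∑' n, p (n + 1) := htail.tsum_eq.symm
    _ ≤ ∑' n : ℕ, ((n + 1 : ℕ) : ℝ) * p (n + 1) :=
      htail.summable.tsum_le_tsum hweight ((summable_nat_add_iff 1).mpr hN)
    _ = ∑' n : ℕ, (n : ℝ) * p n := by simp [hN.tsum_eq_zero_add]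

theorem Complex.sq_norm_add_eq (z w : ℂ) :
    ‖z + w‖ ^ 2 = ‖z‖ ^ 2 + 2 * (starRingEnd ℂ w * z).re + ‖w‖ ^ 2 := by
  rw [Complex.sq_norm, Complex.sq_norm, Complex.sq_norm, Complex.normSq_add, mul_comm _ z]
  ring

/-- (Lemma 1, first line.) For any single-mode state `σ'` and `α' ∈ ℂ`, the
infidelity with the coherent state `|α'⟩` is bounded by phase-space variance plus squared bias:
`1 - ⟨α'|σ'|α'⟩ ≤ Tr(σ'a†a) - |Tr(σ'a)|² + |Tr(σ'a)-α'|²`.  The state is encoded through the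
Fock-basis data of the displaced state `τ = D(α')†σ'D(α')`: its diagonal (a probability
distribution `τdiag`), its first moment `τa = Tr(τ a)`; the displacement relations
`Tr(σ'a) = Tr(τ a) + α'`, `Tr(σ'a†a) = Tr(τ a†a) + 2Re(ᾱ'Tr(τ a)) + |α'|²`, and
`⟨α'|σ'|α'⟩ = ⟨0|τ|0⟩` are recorded as hypotheses. -/
theorem infidelity_le_variance_plus_bias
    (α' : ℂ) (τdiag : ℕ → ℝ) (τa : ℂ)
    (hpos : ∀ l, 0 ≤ τdiag l) (hsum : HasSum τdiag 1)
    (hN : Summable fun l : ℕ => (l : ℝ) * τdiag l)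
    (fid : ℝ) (σa : ℂ) (σN : ℝ)
    (hfid : fid = τdiag 0)
    (hσa : σa = τa + α')
    (hσN : σN = (∑' l : ℕ, (l : ℝ) * τdiag l) + 2 * (starRingEnd ℂ α' * τa).re +
      ‖α'‖ ^ 2) :
    1 - fid ≤ σN - ‖σa‖ ^ 2 + ‖σa - α'‖ ^ 2 := by
  subst hfid hσa hσN
  have markov := hsum.sub_apply_zero_le_tsum_natCast_mul hpos hN
  rw [Complex.sq_norm_add_eq, add_sub_cancel_right]
  linarith
end

section
/- The moment-generating function of the Fock-basis energy distribution ρ_{l,l} of a coherent thermal state ρ(β,α) (α real) is M(t) = Σ_{l≥0} ρ_{l,l} e^{tl} = exp[α²(e^t - 1)/(1 - (e^t - 1)n_β)] / (1 - (e^t - 1)n_β), valid for e^t < 1 + 1/n_β. -/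
/-- The `l`-th (ordinary) Laguerre polynomial `L_l(z) = Σ_{i=0}^l (-1)^i C(l,l-i) z^i/i!`. -/
noncomputable def laguerre (l : ℕ) (z : ℝ) : ℝ :=
  ∑ i ∈ Finset.range (l + 1), (-1 : ℝ) ^ i * (l.choose (l - i)) * z ^ i / (Nat.factorial i : ℝ)

/-!
Writing `p ^ l * L_l(z)` as `∑_{i+k=l} C(k+i, i) p^k q^i / i!` with `q = -p z` turns the Laguerre
generating function into a double series that sums first in `k` (negative binomial series,
`(1-p)^{-(i+1)}`) and then in `i` (exponential series); absolute convergence for `|p| < 1` comes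
from the same computation with `|p|, |q|`. The moment-generating function is this generating
function at `p = n_β e^t / (n_β + 1)`, and `e^t < 1 + 1/n_β` is exactly `p < 1`.
-/

open Finset Real
open scoped Nat

theorem HasSum.sum_antidiagonal {A M : Type*} [AddMonoid A] [HasAntidiagonal A] [AddCommMonoid M]
    [TopologicalSpace M] [ContinuousAdd M] [RegularSpace M] {f : A × A → M} {a : M}
    (h : HasSum f a) :
    HasSum (fun n => ∑ x ∈ antidiagonal n, f x) a := by
  refine (HasAntidiagonal.sigmaAntidiagonalEquivProd.hasSum_iff.2 h).sigma fun n => ?_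
  rw [← sum_coe_sort]
  exact hasSum_fintype _

section LaguerreGeneratingFunction

variable {p : ℝ} (q : ℝ)

theorem hasSum_choose_mul_geometric_mul (hp : ‖p‖ < 1) (i : ℕ) :
    HasSum (fun k : ℕ => ((k + i).choose i : ℝ) * p ^ k * (q ^ i / i !))
      (1 / (1 - p) ^ (i + 1) * (q ^ i / i !)) :=
  (hasSum_choose_mul_geometric_of_norm_lt_one i hp).mul_right _

theorem hasSum_geometric_mul_exp_series :
    HasSum (fun i : ℕ => 1 / (1 - p) ^ (i + 1) * (q ^ i / i !)) (exp (q / (1 - p)) / (1 - p)) := by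
  have h := (NormedSpace.expSeries_div_hasSum_exp (q / (1 - p))).mul_left (1 / (1 - p))
  rw [← Real.exp_eq_exp_ℝ] at h
  generalize 1 - p = r at h ⊢
  have hterm : (fun i : ℕ => 1 / r ^ (i + 1) * (q ^ i / i !)) =
      fun i => 1 / r * ((q / r) ^ i / i !) := by
    ext i
    ring
  rwa [hterm, div_eq_inv_mul (exp _), ← one_div]

theorem hasSum_choose_mul_geometric_mul_exp_series (hp : ‖p‖ < 1) :
    HasSum (fun x : ℕ × ℕ => ((x.2 + x.1).choose x.1 : ℝ) * p ^ x.2 * (q ^ x.1 / x.1 !))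
      (exp (q / (1 - p)) / (1 - p)) := by
  have hsummable :
      Summable fun x : ℕ × ℕ => ((x.2 + x.1).choose x.1 : ℝ) * p ^ x.2 * (q ^ x.1 / x.1 !) := by
    refine Summable.of_norm ?_
    have hnorm : (fun x : ℕ × ℕ => ‖((x.2 + x.1).choose x.1 : ℝ) * p ^ x.2 * (q ^ x.1 / x.1 !)‖) =
        fun x => ((x.2 + x.1).choose x.1 : ℝ) * |p| ^ x.2 * (|q| ^ x.1 / x.1 !) := by
      ext x
      simp
    have hp' : ‖|p|‖ < 1 := by rwa [Real.norm_eq_abs, abs_abs]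
    rw [hnorm, summable_prod_of_nonneg fun x => by positivity]
    exact ⟨fun i => (hasSum_choose_mul_geometric_mul |q| hp' i).summable,
      (hasSum_geometric_mul_exp_series |q|).summable.congr fun i =>
        (hasSum_choose_mul_geometric_mul |q| hp' i).tsum_eq.symm⟩
  have h := hsummable.hasSum
  rwa [(h.prod_fiberwise (hasSum_choose_mul_geometric_mul q hp)).unique
    (hasSum_geometric_mul_exp_series q)] at h

end LaguerreGeneratingFunction

theorem pow_mul_laguerre (p z : ℝ) (l : ℕ) :
    p ^ l * laguerre l z = ∑ x ∈ antidiagonal l,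
      ((x.2 + x.1).choose x.1 : ℝ) * p ^ x.2 * ((-(p * z)) ^ x.1 / x.1 !) := by
  rw [Nat.sum_antidiagonal_eq_sum_range_succ_mk, laguerre, mul_sum]
  refine sum_congr rfl fun i hi => ?_
  obtain ⟨k, rfl⟩ := Nat.exists_eq_add_of_le (Nat.lt_succ_iff.mp (mem_range.mp hi))
  rw [Nat.add_sub_cancel_left, add_comm k i, Nat.choose_symm_add]
  ring

theorem hasSum_pow_mul_laguerre {p : ℝ} (hp : ‖p‖ < 1) (z : ℝ) :
    HasSum (fun l => p ^ l * laguerre l z) (exp (-(p * z) / (1 - p)) / (1 - p)) := by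
  simpa only [pow_mul_laguerre] using
    (hasSum_choose_mul_geometric_mul_exp_series (-(p * z)) hp).sum_antidiagonal

theorem exp_div_mul_laguerre_generating_value {n s : ℝ} (α : ℝ) (hn : n ≠ 0) (hn1 : n + 1 ≠ 0)
    (hD : 1 - (s - 1) * n ≠ 0) :
    exp (-α ^ 2 / (n + 1)) / (n + 1) *
        (exp (-(n * s / (n + 1) * (-α ^ 2 / (n * (n + 1)))) / (1 - n * s / (n + 1))) /
          (1 - n * s / (n + 1)))
      = exp (α ^ 2 * (s - 1) / (1 - (s - 1) * n)) / (1 - (s - 1) * n) := by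
  have h1p : 1 - n * s / (n + 1) = (1 - (s - 1) * n) / (n + 1) := by
    field_simp
    ring
  have hexponent : -α ^ 2 / (n + 1) + -(n * s / (n + 1) * (-α ^ 2 / (n * (n + 1)))) /
      ((1 - (s - 1) * n) / (n + 1)) = α ^ 2 * (s - 1) / (1 - (s - 1) * n) := by
    rw [eq_div_iff hD, div_div_eq_mul_div, add_mul, div_mul_cancel₀ _ hD]
    field_simp
    ring
  rw [h1p, ← hexponent, exp_add]
  field_simp

theorem coherent_thermal_mgf_general (α nβ t : ℝ) (hn : 0 < nβ)
    (ht : Real.exp t < 1 + 1 / nβ) :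
    ∑' l : ℕ,
        (Real.exp (-α ^ 2 / (nβ + 1)) / (nβ + 1) * (nβ / (nβ + 1)) ^ l *
          laguerre l (-α ^ 2 / (nβ * (nβ + 1)))) * Real.exp (t * l)
      = Real.exp (α ^ 2 * (Real.exp t - 1) / (1 - (Real.exp t - 1) * nβ)) /
          (1 - (Real.exp t - 1) * nβ) := by
  have hlt : nβ * exp t < nβ + 1 := by
    have := mul_lt_mul_of_pos_left ht hn
    rwa [mul_add, mul_one, mul_one_div_cancel hn.ne'] at this
  have hn1 : 0 < nβ + 1 := by positivity
  have hp : ‖nβ * exp t / (nβ + 1)‖ < 1 := by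
    rw [Real.norm_eq_abs, abs_of_nonneg (by positivity), div_lt_one hn1]
    exact hlt
  have hterm (l : ℕ) : (exp (-α ^ 2 / (nβ + 1)) / (nβ + 1) * (nβ / (nβ + 1)) ^ l *
      laguerre l (-α ^ 2 / (nβ * (nβ + 1)))) * exp (t * l) =
      exp (-α ^ 2 / (nβ + 1)) / (nβ + 1) *
        ((nβ * exp t / (nβ + 1)) ^ l * laguerre l (-α ^ 2 / (nβ * (nβ + 1)))) := by
    rw [mul_comm t, Real.exp_nat_mul, div_pow, div_pow, mul_pow]
    ring
  rw [tsum_congr hterm, tsum_mul_left, (hasSum_pow_mul_laguerre hp _).tsum_eq,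
    exp_div_mul_laguerre_generating_value α hn.ne' hn1.ne' (by linarith)]

/-- Moment-generating function of the Fock-basis energy distribution
`ρ_{l,l} = (e^{-α²/(n_β+1)}/(n_β+1))(n_β/(n_β+1))^l L_l(-α²/(n_β(n_β+1)))` of a coherent thermal
state (`α` real): for `e^t < 1 + 1/n_β`,
`M(t) = Σ_l ρ_{l,l} e^{tl} = exp[α²(e^t-1)/(1-(e^t-1)n_β)]/(1-(e^t-1)n_β)`. -/
theorem coherent_thermal_mgf (α nβ t : ℝ) (hα : 0 < α) (hn : 0 < nβ)
    (ht : Real.exp t < 1 + 1 / nβ) :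
    ∑' l : ℕ,
        (Real.exp (-α ^ 2 / (nβ + 1)) / (nβ + 1) * (nβ / (nβ + 1)) ^ l *
          laguerre l (-α ^ 2 / (nβ * (nβ + 1)))) * Real.exp (t * l)
      = Real.exp (α ^ 2 * (Real.exp t - 1) / (1 - (Real.exp t - 1) * nβ)) /
          (1 - (Real.exp t - 1) * nβ) :=
  coherent_thermal_mgf_general α nβ t hn ht
end

section
/- For a probability distribution ψ on nonnegative integers with finite second moment, the truncation f_M(ψ) that moves all mass from {E > M} onto the point E = M does not increase the variance: Var(f_M(ψ)) ≤ Var(ψ). -/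
/-- The truncation `f_M(ψ)` of a distribution on `ℕ`: probabilities below `M` are kept, and all
mass from `{E ≥ M}` is placed at the point `E = M`. -/
noncomputable def truncate (ψ : ℕ → ℝ) (M : ℕ) : ℕ → ℝ := fun E =>
  if E < M then ψ E
  else if E = M then ∑' E' : ℕ, (if M ≤ E' then ψ E' else 0)
  else 0

/-- Mean of a distribution on `ℕ`. -/
noncomputable def distMean (ψ : ℕ → ℝ) : ℝ := ∑' E : ℕ, ψ E * E

/-- Variance of a distribution on `ℕ`. -/
noncomputable def distVar (ψ : ℕ → ℝ) : ℝ :=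
  (∑' E : ℕ, ψ E * (E : ℝ) ^ 2) - (distMean ψ) ^ 2

/-! The map `x ↦ min x M` is 1-Lipschitz, so with `μ` the mean of `ψ` and `c = min μ M`,
`Var(f_M(ψ)) ≤ 𝔼_ψ[(min X M - c)²] ≤ 𝔼_ψ[(X - μ)²] = Var(ψ)`: the first inequality because the
variance is the least mean squared deviation from a constant, the second pointwise. -/

open Finset

section Moments

variable {p : ℕ → ℝ}

lemma summable_mul_cast_of_summable_mul_sq (hp : ∀ E, 0 ≤ p E)
    (h2 : Summable fun E => p E * (E : ℝ) ^ 2) : Summable fun E => p E * (E : ℝ) :=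
  h2.of_nonneg_of_le (fun E => mul_nonneg (hp E) E.cast_nonneg) fun E =>
    mul_le_mul_of_nonneg_left (by exact_mod_cast Nat.le_self_pow two_ne_zero E) (hp E)

lemma hasSum_mul_sq_sub (hp : HasSum p 1) (h1 : Summable fun E => p E * (E : ℝ))
    (h2 : Summable fun E => p E * (E : ℝ) ^ 2) (c : ℝ) :
    HasSum (fun E => p E * ((E : ℝ) - c) ^ 2) (distVar p + (distMean p - c) ^ 2) := by
  have hvar : distVar p + (distMean p - c) ^ 2 =
      ∑' E, p E * (E : ℝ) ^ 2 - 2 * c * ∑' E, p E * (E : ℝ) + c ^ 2 * 1 := by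
    unfold distVar distMean; ring
  rw [hvar, funext fun E => show p E * ((E : ℝ) - c) ^ 2 =
    p E * (E : ℝ) ^ 2 - 2 * c * (p E * E) + c ^ 2 * p E by ring]
  exact (h2.hasSum.sub (h1.hasSum.mul_left (2 * c))).add (hp.mul_left (c ^ 2))

lemma distVar_le_tsum_mul_sq_sub (hp : HasSum p 1) (h1 : Summable fun E => p E * (E : ℝ))
    (h2 : Summable fun E => p E * (E : ℝ) ^ 2) (c : ℝ) :
    distVar p ≤ ∑' E, p E * ((E : ℝ) - c) ^ 2 := by
  rw [(hasSum_mul_sq_sub hp h1 h2 c).tsum_eq]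
  exact le_add_of_nonneg_right (sq_nonneg _)

end Moments

section Truncate

variable {ψ : ℕ → ℝ} {M : ℕ}

lemma truncate_eq_zero_of_lt {E : ℕ} (h : M < E) : truncate ψ M E = 0 := by
  simp [truncate, h.not_gt, h.ne']

lemma summable_truncate_mul (g : ℕ → ℝ) : Summable fun E => truncate ψ M E * g E :=
  summable_of_ne_finset_zero (s := range (M + 1)) fun E hE => by
    rw [truncate_eq_zero_of_lt (by simpa using hE), zero_mul]

lemma tsum_truncate_mul (g : ℕ → ℝ) :
    ∑' E, truncate ψ M E * g E =
      ∑ E ∈ range M, ψ E * g E + (∑' E, if M ≤ E then ψ E else 0) * g M := by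
  rw [tsum_eq_sum (s := range (M + 1)) fun E hE => by
    rw [truncate_eq_zero_of_lt (by simpa using hE), zero_mul], sum_range_succ]
  congr 1
  · exact sum_congr rfl fun E hE => by simp [truncate, mem_range.1 hE]
  · simp [truncate]

lemma hasSum_mul_min (hψ : Summable ψ) (g : ℕ → ℝ) :
    HasSum (fun E => ψ E * g (min E M)) (∑' E, truncate ψ M E * g E) := by
  have head : HasSum (fun E => if E < M then ψ E * g E else 0) (∑ E ∈ range M, ψ E * g E) := by
    have h := hasSum_sum_of_ne_finset_zero (L := SummationFilter.unconditional ℕ)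
      (f := fun E => if E < M then ψ E * g E else 0) (s := range M) fun E hE => by simp_all
    rwa [sum_congr rfl fun E hE => if_pos (mem_range.1 hE)] at h
  have tail : HasSum (fun E => (if M ≤ E then ψ E else 0) * g M)
      ((∑' E, if M ≤ E then ψ E else 0) * g M) := by
    have := (hψ.indicator {E | M ≤ E}).hasSum.mul_right (g M)
    simpa only [Set.indicator_apply, Set.mem_ofPred_eq] using this
  rw [tsum_truncate_mul]
  convert head.add tail using 1
  ext E
  rcases lt_or_ge E M with h | h
  · simp [h, h.le, h.not_ge]
  · simp [h, h.not_gt]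

lemma hasSum_truncate (hψ : HasSum ψ 1) : HasSum (truncate ψ M) 1 := by
  have h := hasSum_mul_min (M := M) hψ.summable fun _ => 1
  simp only [mul_one] at h
  have hs : Summable (truncate ψ M) := by simpa using summable_truncate_mul (ψ := ψ) (M := M) 1
  rw [← h.unique hψ]
  exact hs.hasSum

end Truncate

lemma sq_min_sub_min_le (x y a : ℝ) : (min x a - min y a) ^ 2 ≤ (x - y) ^ 2 := by
  rw [sq_le_sq]
  simpa using abs_min_sub_min_le_max x a y a

/-- For a probability distribution `ψ` on `ℕ` with finite second moment,
the truncation `f_M(ψ)` (mass beyond `M` moved to the point `M`) does not increase the variance: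
`Var(f_M(ψ)) ≤ Var(ψ)`. -/
theorem truncation_var_le (ψ : ℕ → ℝ) (hpos : ∀ E, 0 ≤ ψ E) (hsum : HasSum ψ 1)
    (h2 : Summable fun E => ψ E * (E : ℝ) ^ 2) (M : ℕ) :
    distVar (truncate ψ M) ≤ distVar ψ := by
  set μ := distMean ψ
  set c := min μ M
  have hvar : HasSum (fun E => ψ E * ((E : ℝ) - μ) ^ 2) (distVar ψ) := by
    simpa [μ] using hasSum_mul_sq_sub hsum (summable_mul_cast_of_summable_mul_sq hpos h2) h2 μ
  have hpush := hasSum_mul_min (M := M) hsum.summable fun E => ((E : ℝ) - c) ^ 2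
  calc distVar (truncate ψ M)
      ≤ ∑' E, truncate ψ M E * ((E : ℝ) - c) ^ 2 :=
        distVar_le_tsum_mul_sq_sub (hasSum_truncate hsum) (summable_truncate_mul _)
          (summable_truncate_mul _) c
    _ = ∑' E, ψ E * (((min E M : ℕ) : ℝ) - c) ^ 2 := hpush.tsum_eq.symm
    _ ≤ ∑' E, ψ E * ((E : ℝ) - μ) ^ 2 :=
        hpush.summable.tsum_le_tsum (fun E => mul_le_mul_of_nonneg_left
          (by rw [Nat.cast_min]; exact sq_min_sub_min_le _ _ _) (hpos E)) hvar.summable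
    _ = distVar ψ := hvar.tsum_eq
end

section
/- Under any single-mode phase-insensitive Gaussian channel, a coherent thermal state transforms as ρ(β,α) ↦ ρ(β', xα) with n_th(β') = x² n_th(β) + (x² + y - 1)/2, where x² is the gain and the added noise y satisfies y ≥ |x² - 1|; consequently, for any sequence of such channels applied to ρ(β, √n α) whose outputs approach |α⟩, one has limsup_{n→∞} n·(1 - ⟨α|output_n|α⟩) ≥ n_th(β). -/
/-!
The output covariance is `Z = 1 + n_out ≥ 1 + x² n_th`, because the noise bound `y ≥ 1 - x²`
makes `x² + y - 1 ≥ 0`. The fidelity `F = Z⁻¹ e^{-d²/Z}` is a product of two factors in `[0, 1]`,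
so `F → 1` forces `Z → 1` and `d = x √n α - α → 0`, i.e. `n x² → 1`. Finally
`n (1 - F) ≥ n (1 - Z⁻¹) = n (Z - 1) / Z ≥ n x² n_th / Z → n_th`.
-/

open Filter Topology Real

lemma exp_neg_sq_div_le_one {d Z : ℝ} (hZ : 0 ≤ Z) : exp (-d ^ 2 / Z) ≤ 1 := by
  rw [exp_le_one_iff, neg_div]
  exact neg_nonpos.mpr (div_nonneg (sq_nonneg d) hZ)

section

variable {ι : Type*} {l : Filter ι}

lemma tendsto_one_of_mul_tendsto_one {a b : ι → ℝ} (ha : ∀ i, 0 ≤ a i) (ha₁ : ∀ i, a i ≤ 1)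
    (hb₁ : ∀ i, b i ≤ 1) (hab : Tendsto (fun i => a i * b i) l (𝓝 1)) : Tendsto a l (𝓝 1) :=
  tendsto_of_tendsto_of_tendsto_of_le_of_le hab tendsto_const_nhds
    (fun i => mul_le_of_le_one_right (ha i) (hb₁ i)) ha₁

lemma tendsto_zero_of_tendsto_exp_neg_sq_div {d Z : ι → ℝ} (hZ : Tendsto Z l (𝓝 1))
    (h : Tendsto (fun i => exp (-d i ^ 2 / Z i)) l (𝓝 1)) : Tendsto d l (𝓝 0) := by
  have hlog : Tendsto (fun i => -d i ^ 2 / Z i) l (𝓝 0) := by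
    simpa [Function.comp_def] using ((continuousAt_log one_ne_zero).tendsto.comp h)
  have hsq : Tendsto (fun i => d i ^ 2) l (𝓝 0) := by
    refine ((hlog.mul hZ).neg).congr' ?_ |>.trans (by simp)
    filter_upwards [hZ.eventually_ne one_ne_zero] with i hi
    field_simp
  rw [tendsto_zero_iff_abs_tendsto_zero]
  simpa [Function.comp_def, sqrt_sq_eq_abs] using hsq.sqrt

lemma tendsto_mul_sq_of_tendsto_mul_sqrt_mul_sub {t x : ι → ℝ} {α : ℝ} (hα : α ≠ 0)
    (ht : ∀ i, 0 ≤ t i) (h : Tendsto (fun i => x i * √(t i) * α - α) l (𝓝 0)) :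
    Tendsto (fun i => t i * x i ^ 2) l (𝓝 1) := by
  have hx : Tendsto (fun i => x i * √(t i)) l (𝓝 1) := by
    convert (h.add_const α).div_const α using 1
    · ext i; field_simp; ring
    · simp [hα]
  convert hx.pow 2 using 1
  · ext i; rw [mul_pow, sq_sqrt (ht i), mul_comm]
  · simp

lemma tendsto_of_inv_mul_exp_neg_sq_div_tendsto_one {d Z : ι → ℝ} (hZ : ∀ i, 1 ≤ Z i)
    (hF : Tendsto (fun i => 1 / Z i * exp (-d i ^ 2 / Z i)) l (𝓝 1)) :
    Tendsto Z l (𝓝 1) ∧ Tendsto d l (𝓝 0) := by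
  have hZpos : ∀ i, 0 < Z i := fun i => zero_lt_one.trans_le (hZ i)
  have hinv_nonneg : ∀ i, 0 ≤ 1 / Z i := fun i => one_div_nonneg.mpr (hZpos i).le
  have hinv_le : ∀ i, 1 / Z i ≤ 1 := fun i => div_le_one_of_le₀ (hZ i) (hZpos i).le
  have hexp_le : ∀ i, exp (-d i ^ 2 / Z i) ≤ 1 := fun i => exp_neg_sq_div_le_one (hZpos i).le
  have hZlim : Tendsto Z l (𝓝 1) := by
    simpa using (tendsto_one_of_mul_tendsto_one hinv_nonneg hinv_le hexp_le hF).inv₀ one_ne_zero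
  refine ⟨hZlim, tendsto_zero_of_tendsto_exp_neg_sq_div hZlim ?_⟩
  exact tendsto_one_of_mul_tendsto_one (fun i => (exp_pos _).le) hexp_le hinv_le
    (hF.congr fun i => mul_comm _ _)

lemma ENNReal.ofReal_le_limsup_of_tendsto_of_le [l.NeBot] {f g : ι → ℝ} {c : ℝ}
    (hg : Tendsto g l (𝓝 c)) (hgf : ∀ i, g i ≤ f i) :
    ENNReal.ofReal c ≤ limsup (fun i => ENNReal.ofReal (f i)) l := by
  rw [← ((ENNReal.continuous_ofReal.tendsto c).comp hg).limsup_eq]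
  exact limsup_le_limsup (.of_forall fun i => ENNReal.ofReal_le_ofReal (hgf i))

end

lemma div_le_one_sub_inv_mul_exp_neg_sq_div {c d Z : ℝ} (hZ : 0 < Z) (hcZ : 1 + c ≤ Z) :
    c / Z ≤ 1 - 1 / Z * exp (-d ^ 2 / Z) := by
  calc c / Z ≤ (Z - 1) / Z := div_le_div_of_nonneg_right (by linarith) hZ.le
    _ = 1 - 1 / Z := by field_simp
    _ ≤ 1 - 1 / Z * exp (-d ^ 2 / Z) := by
        gcongr
        exact mul_le_of_le_one_right (one_div_nonneg.mpr hZ.le) (exp_neg_sq_div_le_one hZ.le)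

theorem gaussian_channel_limsup_general (β ω : ℝ) (α : ℝ) (hα : 0 < α)
    (x y : ℕ → ℝ) (hy : ∀ n, |x n ^ 2 - 1| ≤ y n) :
    let nth := (Real.exp (β * ω) - 1)⁻¹
    let nout : ℕ → ℝ := fun n => x n ^ 2 * nth + (x n ^ 2 + y n - 1) / 2
    let F : ℕ → ℝ := fun n =>
      (1 / (1 + nout n)) * Real.exp (-(x n * Real.sqrt n * α - α) ^ 2 / (1 + nout n))
    Filter.Tendsto F Filter.atTop (nhds 1) →
      ENNReal.ofReal nth ≤
        Filter.limsup (fun n : ℕ => ENNReal.ofReal ((n : ℝ) * (1 - F n))) Filter.atTop := by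
  intro nth nout F hF
  rcases le_or_gt nth 0 with hnth | hnth
  · simp [ENNReal.ofReal_of_nonpos hnth]
  have hZ : ∀ n, 1 + x n ^ 2 * nth ≤ 1 + nout n := fun n => by
    have := neg_abs_le (x n ^ 2 - 1)
    simp only [nout]
    linarith [hy n]
  have hZ₁ : ∀ n, 1 ≤ 1 + nout n := fun n => (le_add_of_nonneg_right (by positivity)).trans (hZ n)
  obtain ⟨hZlim, hd⟩ := tendsto_of_inv_mul_exp_neg_sq_div_tendsto_one hZ₁ hF
  have hnx : Tendsto (fun n : ℕ => (n : ℝ) * x n ^ 2) atTop (𝓝 1) :=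
    tendsto_mul_sq_of_tendsto_mul_sqrt_mul_sub hα.ne' (fun n => n.cast_nonneg) hd
  have hg : Tendsto (fun n : ℕ => (n : ℝ) * x n ^ 2 * nth / (1 + nout n)) atTop (𝓝 nth) := by
    simpa [Pi.div_def] using (hnx.mul_const nth).div hZlim one_ne_zero
  refine ENNReal.ofReal_le_limsup_of_tendsto_of_le hg fun n => ?_
  rw [mul_assoc, mul_div_assoc]
  exact mul_le_mul_of_nonneg_left
    (div_le_one_sub_inv_mul_exp_neg_sq_div (zero_lt_one.trans_le (hZ₁ n)) (hZ n)) n.cast_nonneg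

/-- Optimality bound for single-mode phase-insensitive Gaussian distillation.
A phase-insensitive Gaussian channel with gain `x²` and added noise `y ≥ |x²-1|` maps
`ρ(β,α) ↦ ρ(β', xα)` with `n_th(β') = x² n_th(β) + (x²+y-1)/2`; the fidelity of
`ρ(β',α')` with `|α⟩` is `(1/Z')e^{-|α-α'|²/Z'}`, `Z' = 1+n_th(β')`.  For any sequence of such
channels applied to `ρ(β,√n α)` whose output fidelities `F n` with `|α⟩` tend to 1, one has
`limsup_n n(1-F n) ≥ n_th(β)`. -/
theorem gaussian_channel_limsup (β ω : ℝ) (hβ : 0 < β) (hω : 0 < ω) (α : ℝ) (hα : 0 < α)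
    (x y : ℕ → ℝ) (hy : ∀ n, |x n ^ 2 - 1| ≤ y n) :
    let nth := (Real.exp (β * ω) - 1)⁻¹
    let nout : ℕ → ℝ := fun n => x n ^ 2 * nth + (x n ^ 2 + y n - 1) / 2
    let F : ℕ → ℝ := fun n =>
      (1 / (1 + nout n)) * Real.exp (-(x n * Real.sqrt n * α - α) ^ 2 / (1 + nout n))
    Filter.Tendsto F Filter.atTop (nhds 1) →
      ENNReal.ofReal nth ≤
        Filter.limsup (fun n : ℕ => ENNReal.ofReal ((n : ℝ) * (1 - F n))) Filter.atTop :=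
  gaussian_channel_limsup_general β ω α hα x y hy
end
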